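/- Let λ be a real number with −9/5 ≤ λ < −1, and let ρ₁, ρ₂ be the two real roots of the quadratic factor q_λ. Then 1/9 ≤ max{ρ₁², ρ₂²} < 1, and max{ρ₁², ρ₂²} = 1/9 if and only if λ = −9/5. -/
import Mathlib


/-- For `−9/5 ≤ λ < −1`, the two real roots
`ρ₁ = (3−λ+√((9+5λ)(1−3λ)))/(8λ)` and `ρ₂ = (3−λ−√((9+5λ)(1−3λ)))/(8λ)` of the quadratic
factor `q_λ` satisfy `1/9 ≤ max{ρ₁², ρ₂²} < 1`, with equality `max{ρ₁², ρ₂²} = 1/9` iff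
`λ = −9/5`. -/
theorem zerosnet_real_roots_squares (l : ℝ) (h₁ : -9 / 5 ≤ l) (h₂ : l < -1)
    (ρ₁ ρ₂ : ℝ)
    (hρ₁ : ρ₁ = (3 - l + Real.sqrt ((9 + 5 * l) * (1 - 3 * l))) / (8 * l))
    (hρ₂ : ρ₂ = (3 - l - Real.sqrt ((9 + 5 * l) * (1 - 3 * l))) / (8 * l)) :
    1 / 9 ≤ max (ρ₁ ^ 2) (ρ₂ ^ 2) ∧ max (ρ₁ ^ 2) (ρ₂ ^ 2) < 1 ∧
    (max (ρ₁ ^ 2) (ρ₂ ^ 2) = 1 / 9 ↔ l = -9 / 5) := by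
  have hl9 : 0 ≤ 9 + 5 * l := by linarith
  have hl3 : 0 ≤ 1 - 3 * l := by linarith
  have hl : l < 0 := by linarith
  have hlne : l ≠ 0 := ne_of_lt hl
  set s := Real.sqrt ((9 + 5 * l) * (1 - 3 * l)) with hs
  have hs0 : 0 ≤ s := Real.sqrt_nonneg _
  have hsq : s ^ 2 = (9 + 5 * l) * (1 - 3 * l) := Real.sq_sqrt (mul_nonneg hl9 hl3)
  have hsl : s < -(7 * l) - 3 := by nlinarith [sq_nonneg (s + 7 * l + 3), sq_nonneg s]
  have hρ1sq : ρ₁ ^ 2 = (3 - l + s) ^ 2 / (64 * l ^ 2) := by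
    rw [hρ₁, div_pow]; rw [show (8*l)^2 = 64 * l^2 by ring]
  have hρ2sq : ρ₂ ^ 2 = (3 - l - s) ^ 2 / (64 * l ^ 2) := by
    rw [hρ₂, div_pow]; rw [show (8*l)^2 = 64 * l^2 by ring]
  have hden : (0:ℝ) < 64 * l ^ 2 := by positivity
  have hmax : max (ρ₁ ^ 2) (ρ₂ ^ 2) = ρ₁ ^ 2 := by
    apply max_eq_left
    rw [hρ1sq, hρ2sq]
    exact (div_le_div_iff_of_pos_right hden).mpr (by nlinarith)
  rw [hmax, hρ1sq]
  refine ⟨?_, ?_, ?_, ?_⟩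
  · rw [le_div_iff₀ hden]
    nlinarith [hs0, hl9]
  · rw [div_lt_one hden]
    nlinarith [hsl]
  · intro h
    rw [div_eq_div_iff hden.ne' (by norm_num : (9:ℝ) ≠ 0)] at h
    -- (3 - l + s)^2 * 9 = 1 * (64 * l^2)
    have ht : 3 * s + 5 * l + 9 ≥ 0 := by linarith
    have ht2 : 3 * s + 5 * l + 9 ≤ 0 := by nlinarith [h, hs0]
    have hs' : s = 0 := by linarith
    rw [hs'] at h
    nlinarith [h]
  · intro h
    subst h
    have hs' : s = 0 := by
      rw [hs]
      norm_num
    rw [hs']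
    norm_num
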